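/- Let m ≥ 2 and let S be a subset of so(m,ℂ) invariant under the adjoint action of SO(m,ℂ). Let R be a symmetric bilinear form on so(m,ℝ), extended complex-bilinearly to so(m,ℂ), with associated self-adjoint operator 𝓡 via the trace inner product ⟨X,Y⟩ = −tr(XY) (extended ℂ-bilinearly). Suppose R(ω, ω̄) ≥ 0 for every ω ∈ S, and v ∈ S satisfies R(v, v̄) = 0. Then the operator −ad_v ∘ 𝓡 ∘ ad_{v̄} on so(m,ℂ) is positive semidefinite Hermitian; i.e. ⟨(ad_v ∘ 𝓡 ∘ ad_{v̄})(x), x̄⟩ ≤ 0 for all x ∈ so(m,ℂ). -/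

import Mathlib

/-!
Statement 4: the operator -ad_v ∘ 𝓡 ∘ ad_{v̄} is positive semidefinite Hermitian.
We encode the form `R` via its associated self-adjoint operator `T`: `R X Y = -tr((T X) ⬝ Y)`.
-/

noncomputable section

open Matrix ComplexOrder

noncomputable section

/-- The Lie algebra `so(m,ℂ)` of skew-symmetric complex `m × m` matrices,
as a complex submodule of the matrix space. -/
def soC (m : ℕ) : Submodule ℂ (Matrix (Fin m) (Fin m) ℂ) where
  carrier := {X | Xᵀ = -X}
  add_mem' := by
    intro a b ha hb
    simp only [Set.mem_setOf_eq] at *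
    rw [transpose_add, ha, hb, neg_add]
  zero_mem' := by simp
  smul_mem' := by
    intro c x hx
    simp only [Set.mem_setOf_eq] at *
    rw [transpose_smul, hx, smul_neg]

namespace soC

variable {m : ℕ}

lemma mem_iff {X : Matrix (Fin m) (Fin m) ℂ} : X ∈ soC m ↔ Xᵀ = -X := Iff.rfl

/-- Entrywise complex conjugation `ω ↦ ω̄` on `so(m,ℂ)`. -/
def conj (X : soC m) : soC m :=
  ⟨(X : Matrix (Fin m) (Fin m) ℂ).map (starRingEnd ℂ), by
    have hX : (X : Matrix (Fin m) (Fin m) ℂ)ᵀ = -(X : Matrix (Fin m) (Fin m) ℂ) := X.2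
    rw [mem_iff]
    ext i j
    have h := congrFun (congrFun hX i) j
    simp only [transpose_apply, neg_apply] at h
    simp only [transpose_apply, map_apply, neg_apply, h, map_neg]
    exact map_neg (starRingEnd ℂ) ((X : Matrix (Fin m) (Fin m) ℂ) i j)⟩

/-- The adjoint map `ad_v = [v, ·]` as a `ℂ`-linear endomorphism of `so(m,ℂ)`. -/
def ad (v : soC m) : soC m →ₗ[ℂ] soC m where
  toFun X := ⟨(v : Matrix (Fin m) (Fin m) ℂ) * X - (X : Matrix (Fin m) (Fin m) ℂ) * v, by
    rw [mem_iff]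
    have hv : (v : Matrix (Fin m) (Fin m) ℂ)ᵀ = -(v : Matrix (Fin m) (Fin m) ℂ) := v.2
    have hX : (X : Matrix (Fin m) (Fin m) ℂ)ᵀ = -(X : Matrix (Fin m) (Fin m) ℂ) := X.2
    rw [transpose_sub, transpose_mul, transpose_mul, hv, hX]
    noncomm_ring⟩
  map_add' X Y := by
    apply Subtype.ext
    simp only [Submodule.coe_add]
    noncomm_ring
  map_smul' c X := by
    apply Subtype.ext
    simp only [Submodule.coe_smul, RingHom.id_apply]
    rw [Matrix.mul_smul, Matrix.smul_mul, smul_sub]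

/-- The complex-bilinear extension of the trace inner product `⟨X,Y⟩ = -tr(XY)` on `so(m,ℝ)`. -/
def ip (X Y : soC m) : ℂ :=
  -Matrix.trace ((X : Matrix (Fin m) (Fin m) ℂ) * (Y : Matrix (Fin m) (Fin m) ℂ))

/-- The adjoint action `v ↦ A v A⁻¹` of `A ∈ SO(m,ℂ)` on `so(m,ℂ)`. -/
def soAct (A : Matrix (Fin m) (Fin m) ℂ) (hA : Aᵀ * A = 1) (v : soC m) : soC m :=
  ⟨A * (v : Matrix (Fin m) (Fin m) ℂ) * A⁻¹, by
    have hAinv : A⁻¹ = Aᵀ := inv_eq_left_inv hA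
    have hv : (v : Matrix (Fin m) (Fin m) ℂ)ᵀ = -(v : Matrix (Fin m) (Fin m) ℂ) := v.2
    rw [mem_iff, hAinv, transpose_mul, transpose_mul, transpose_transpose, hv]
    noncomm_ring⟩

end soC

namespace WKaux
open Matrix Filter Topology ComplexOrder

variable {m : ℕ}

abbrev Mat (m : ℕ) := Matrix (Fin m) (Fin m) ℂ

/-- entrywise conjugation -/
def cj (Z : Mat m) : Mat m := Z.map (starRingEnd ℂ)

lemma cj_val (X : soC m) : cj (X : Mat m) = (soC.conj X : Mat m) := rfl

lemma cj_add (a b : Mat m) : cj (a + b) = cj a + cj b := by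
  ext i j; simp [cj]

lemma cj_smul (s : ℂ) (a : Mat m) : cj (s • a) = (starRingEnd ℂ s) • cj a := by
  ext i j; simp [cj]

lemma cj_cont : Continuous (cj : Mat m → Mat m) :=
  continuous_id.matrix_map continuous_star

/-- the skew-symmetric part, as a linear map into `soC m` -/
def skewPart : Mat m →ₗ[ℂ] soC m where
  toFun Z := ⟨(2⁻¹ : ℂ) • (Z - Zᵀ), by
    rw [soC.mem_iff, transpose_smul, transpose_sub, transpose_transpose, ← smul_neg, neg_sub]⟩
  map_add' a b := by
    apply Subtype.ext
    simp only [Submodule.coe_add, transpose_add]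
    rw [← smul_add]
    congr 1
    abel
  map_smul' c a := by
    apply Subtype.ext
    simp only [Submodule.coe_smul, RingHom.id_apply, transpose_smul]
    rw [← smul_sub, smul_comm]

lemma skewPart_val (Z : soC m) : skewPart (Z : Mat m) = Z := by
  apply Subtype.ext
  show (2⁻¹ : ℂ) • ((Z : Mat m) - (Z : Mat m)ᵀ) = (Z : Mat m)
  rw [Z.2, sub_neg_eq_add, ← two_smul ℂ, smul_smul]
  norm_num

/-- extension of `T` to all matrices -/
def extT (T : soC m →ₗ[ℂ] soC m) : Mat m →ₗ[ℂ] Mat m :=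
  (soC m).subtype ∘ₗ T ∘ₗ skewPart

lemma extT_val (T : soC m →ₗ[ℂ] soC m) (Z : soC m) :
    extT T (Z : Mat m) = (T Z : Mat m) := by
  simp [extT, skewPart_val]

lemma extT_cont (T : soC m →ₗ[ℂ] soC m) : Continuous (extT T) :=
  (extT T).continuous_of_finiteDimensional

/-- the bilinear form -/
def psi (T : soC m →ₗ[ℂ] soC m) (a b : Mat m) : ℂ := -((extT T a) * b).trace

lemma psi_eq_ip (T : soC m →ₗ[ℂ] soC m) (a b : soC m) :
    psi T (a : Mat m) (b : Mat m) = soC.ip (T a) b := by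
  simp [psi, soC.ip, extT_val]

lemma psi_add_left (T : soC m →ₗ[ℂ] soC m) (a b c : Mat m) :
    psi T (a + b) c = psi T a c + psi T b c := by
  simp [psi, map_add, add_mul, trace_add]; ring

lemma psi_add_right (T : soC m →ₗ[ℂ] soC m) (a b c : Mat m) :
    psi T a (b + c) = psi T a b + psi T a c := by
  simp [psi, mul_add, trace_add]; ring

lemma psi_smul_left (T : soC m →ₗ[ℂ] soC m) (s : ℂ) (a b : Mat m) :
    psi T (s • a) b = s * psi T a b := by
  simp [psi, _root_.map_smul, smul_mul_assoc, trace_smul, smul_eq_mul]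

lemma psi_smul_right (T : soC m →ₗ[ℂ] soC m) (s : ℂ) (a b : Mat m) :
    psi T a (s • b) = s * psi T a b := by
  simp [psi, mul_smul_comm, trace_smul, smul_eq_mul]

lemma contAt_psi (T : soC m →ₗ[ℂ] soC m) {f g : ℝ → Mat m} {t0 : ℝ}
    (hf : ContinuousAt f t0) (hg : ContinuousAt g t0) :
    ContinuousAt (fun t => psi T (f t) (g t)) t0 := by
  have h1 : ContinuousAt (fun t => extT T (f t) * g t) t0 :=
    (((extT_cont T).continuousAt).comp hf).mul hg
  exact (((continuous_id.matrix_trace).continuousAt).comp h1).neg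

section Curve

variable (T : soC m →ₗ[ℂ] soC m) (Y V : Mat m)

def Mf (t : ℝ) : Mat m := 1 - (t:ℂ) • Y
def Pf (t : ℝ) : Mat m := 1 + (t:ℂ) • Y
def Af (t : ℝ) : Mat m := (Mf Y t)⁻¹ * Pf Y t
def Bf (t : ℝ) : Mat m := (Pf Y t)⁻¹ * Mf Y t
def omf (t : ℝ) : Mat m := Af Y t * V * (Af Y t)⁻¹
def bM : Mat m := Y * V - V * Y
def cM : Mat m := Y * (Y * V - V * Y) - (Y * V - V * Y) * Y
def uM (s : ℂ) : Mat m := V + (2 * s) • bM Y V + (2 * s ^ 2) • cM Y V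
def ucM (s : ℂ) : Mat m := cj V + (2 * s) • cj (bM Y V) + (2 * s ^ 2) • cj (cM Y V)
def SL (t : ℝ) : Mat m := 1 + (2 * (t:ℂ)) • Y + (2 * (t:ℂ) ^ 2) • (Y * Y)
def SR (t : ℝ) : Mat m := 1 - (2 * (t:ℂ)) • Y + (2 * (t:ℂ) ^ 2) • (Y * Y)
def EE (t : ℝ) : Mat m := Y * (Y * Y) * (1 + Af Y t)
def FF (t : ℝ) : Mat m := Y * (Y * Y) * (1 + Bf Y t)
def pP (t : ℝ) : Mat m :=
  (4:ℂ) • (Y * (V * (Y * Y))) - (4:ℂ) • (Y * (Y * (V * Y)))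
    + (4 * (t:ℂ)) • (Y * (Y * (V * (Y * Y))))
def rM (t : ℝ) : Mat m := pP Y V t + EE Y t * V * Bf Y t - SL Y t * V * FF Y t

lemma Mf_zero : Mf Y 0 = 1 := by simp [Mf]
lemma Pf_zero : Pf Y 0 = 1 := by simp [Pf]
lemma Af_zero : Af Y 0 = 1 := by
  rw [Af, Mf_zero, Pf_zero, Matrix.inv_eq_left_inv (show (1:Mat m) * 1 = 1 from one_mul 1), one_mul]
lemma Mf_neg (t : ℝ) : Mf Y (-t) = Pf Y t := by
  simp [Mf, Pf, Complex.ofReal_neg, neg_smul, sub_neg_eq_add]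
lemma Pf_neg (t : ℝ) : Pf Y (-t) = Mf Y t := by
  simp [Pf, Mf, Complex.ofReal_neg, neg_smul, ← sub_eq_add_neg]

lemma Y3_comm (t : ℝ) : Mf Y t * (Y * (Y * Y)) = Y * (Y * Y) * Mf Y t := by
  simp only [Mf, sub_mul, mul_sub, one_mul, mul_one, smul_mul_assoc, mul_smul_comm, mul_assoc]

lemma hA_eq (t : ℝ) (hM : IsUnit (Mf Y t).det) :
    Af Y t = SL Y t + ((t:ℂ) ^ 3) • (Y * (Y * Y) * (1 + Af Y t)) := by
  have hMur := Matrix.mul_nonsing_inv _ hM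
  have hMru := Matrix.nonsing_inv_mul _ hM
  have h1 : Mf Y t * Af Y t = Pf Y t := by
    rw [Af, ← mul_assoc, hMur, one_mul]
  have h3 : Mf Y t * (Y * (Y * Y) * (1 + Af Y t)) = Y * (Y * Y) * (Mf Y t + Pf Y t) := by
    rw [← mul_assoc, Y3_comm, mul_assoc, mul_add, mul_one, h1, mul_add]
  have h2 : Mf Y t * (SL Y t + ((t:ℂ) ^ 3) • (Y * (Y * Y) * (1 + Af Y t))) = Pf Y t := by
    rw [mul_add, mul_smul_comm, h3]
    simp only [Mf, Pf, SL, mul_add, add_mul, sub_mul, mul_sub, one_mul, mul_one,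
      smul_mul_assoc, mul_smul_comm, smul_smul, smul_add, smul_sub, mul_assoc]
    module
  calc Af Y t = (Mf Y t)⁻¹ * (Mf Y t * Af Y t) := by rw [← mul_assoc, hMru, one_mul]
    _ = (Mf Y t)⁻¹ * (Mf Y t * (SL Y t + ((t:ℂ) ^ 3) • (Y * (Y * Y) * (1 + Af Y t)))) := by
        rw [h1, h2]
    _ = _ := by rw [← mul_assoc, hMru, one_mul]

lemma Y3_comm' (t : ℝ) : Pf Y t * (Y * (Y * Y)) = Y * (Y * Y) * Pf Y t := by
  simp only [Pf, add_mul, mul_add, one_mul, mul_one, smul_mul_assoc, mul_smul_comm, mul_assoc]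

lemma hB_eq (t : ℝ) (hP : IsUnit (Pf Y t).det) :
    Bf Y t = SR Y t - ((t:ℂ) ^ 3) • (Y * (Y * Y) * (1 + Bf Y t)) := by
  have hPur := Matrix.mul_nonsing_inv _ hP
  have hPru := Matrix.nonsing_inv_mul _ hP
  have h1 : Pf Y t * Bf Y t = Mf Y t := by
    rw [Bf, ← mul_assoc, hPur, one_mul]
  have h3 : Pf Y t * (Y * (Y * Y) * (1 + Bf Y t)) = Y * (Y * Y) * (Pf Y t + Mf Y t) := by
    rw [← mul_assoc, Y3_comm', mul_assoc, mul_add, mul_one, h1, mul_add]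
  have h2 : Pf Y t * (SR Y t - ((t:ℂ) ^ 3) • (Y * (Y * Y) * (1 + Bf Y t))) = Mf Y t := by
    rw [mul_sub, mul_smul_comm, h3]
    simp only [Mf, Pf, SR, mul_add, add_mul, sub_mul, mul_sub, one_mul, mul_one,
      smul_mul_assoc, mul_smul_comm, smul_smul, smul_add, smul_sub, mul_assoc]
    module
  calc Bf Y t = (Pf Y t)⁻¹ * (Pf Y t * Bf Y t) := by rw [← mul_assoc, hPru, one_mul]
    _ = (Pf Y t)⁻¹ * (Pf Y t * (SR Y t - ((t:ℂ) ^ 3) • (Y * (Y * Y) * (1 + Bf Y t)))) := by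
        rw [h1, h2]
    _ = _ := by rw [← mul_assoc, hPru, one_mul]

lemma hAinv (t : ℝ) (hM : IsUnit (Mf Y t).det) : (Af Y t)⁻¹ = Bf Y t := by
  rw [Af, Matrix.mul_inv_rev, Matrix.nonsing_inv_nonsing_inv _ hM, Bf]

lemma omf_eq (t : ℝ) (hM : IsUnit (Mf Y t).det) (hP : IsUnit (Pf Y t).det) :
    omf Y V t = uM Y V (t:ℂ) + ((t:ℂ) ^ 3) • rM Y V t := by
  rw [omf, hAinv Y t hM]
  have e1 : Af Y t * V * Bf Y t = SL Y t * V * Bf Y t + ((t:ℂ) ^ 3) • (EE Y t * V * Bf Y t) := by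
    conv_lhs => rw [hA_eq Y t hM]
    rw [EE, add_mul, add_mul, smul_mul_assoc, smul_mul_assoc]
  have e2 : SL Y t * V * Bf Y t
      = SL Y t * V * SR Y t - ((t:ℂ) ^ 3) • (SL Y t * V * FF Y t) := by
    conv_lhs => rw [hB_eq Y t hP]
    rw [FF, mul_sub, mul_smul_comm]
  have e3 : SL Y t * V * SR Y t = uM Y V (t:ℂ) + ((t:ℂ) ^ 3) • pP Y V t := by
    simp only [SL, SR, uM, bM, cM, pP, mul_add, add_mul, sub_mul, mul_sub, one_mul, mul_one,
      smul_mul_assoc, mul_smul_comm, smul_smul, smul_add, smul_sub, mul_assoc]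
    module
  rw [e1, e2, e3, rM]
  simp only [smul_add, smul_sub]
  abel

end Curve

section Curve2

variable (T : soC m →ₗ[ℂ] soC m) (Y V : Mat m)

lemma cj_sub (a b : Mat m) : cj (a - b) = cj a - cj b := by ext i j; simp [cj]
lemma cj_neg (a : Mat m) : cj (-a) = -cj a := by ext i j; simp [cj]
lemma cj_mul (a b : Mat m) : cj (a * b) = cj a * cj b := by
  simp [cj, Matrix.map_mul]
lemma cj_cj (a : Mat m) : cj (cj a) = a := by ext i j; simp [cj]

lemma PfT (t : ℝ) (hY : Yᵀ = -Y) : (Mf Y t)ᵀ = Pf Y t := by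
  simp [Mf, Pf, transpose_sub, transpose_smul, hY, sub_neg_eq_add]

lemma MPcomm (t : ℝ) : Mf Y t * Pf Y t = Pf Y t * Mf Y t := by
  simp only [Mf, Pf, mul_add, add_mul, sub_mul, mul_sub, one_mul, mul_one,
    smul_mul_assoc, mul_smul_comm, smul_smul, mul_assoc]
  module

lemma Af_orth (t : ℝ) (hY : Yᵀ = -Y) (hM : IsUnit (Mf Y t).det) (hP : IsUnit (Pf Y t).det) :
    (Af Y t)ᵀ * Af Y t = 1 := by
  have hMur := Matrix.mul_nonsing_inv _ hM
  have hPru := Matrix.nonsing_inv_mul _ hP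
  have h0 : (Pf Y t)ᵀ = Mf Y t := by rw [← PfT Y t hY, transpose_transpose]
  have h1 : (Af Y t)ᵀ = Mf Y t * (Pf Y t)⁻¹ := by
    rw [Af, transpose_mul, Matrix.transpose_nonsing_inv, PfT Y t hY, h0]
  have h2 : (Pf Y t)⁻¹ * (Mf Y t)⁻¹ = (Mf Y t)⁻¹ * (Pf Y t)⁻¹ := by
    rw [← Matrix.mul_inv_rev, ← Matrix.mul_inv_rev, MPcomm]
  rw [h1, Af]
  calc Mf Y t * (Pf Y t)⁻¹ * ((Mf Y t)⁻¹ * Pf Y t)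
      = Mf Y t * ((Pf Y t)⁻¹ * (Mf Y t)⁻¹) * Pf Y t := by simp only [mul_assoc]
    _ = Mf Y t * ((Mf Y t)⁻¹ * (Pf Y t)⁻¹) * Pf Y t := by rw [h2]
    _ = Mf Y t * (Mf Y t)⁻¹ * ((Pf Y t)⁻¹ * Pf Y t) := by simp only [mul_assoc]
    _ = 1 := by rw [hMur, hPru, one_mul]

lemma Af_det (t : ℝ) (hY : Yᵀ = -Y) (hM : IsUnit (Mf Y t).det) : (Af Y t).det = 1 := by
  rw [Af, det_mul, Matrix.det_nonsing_inv, ← PfT Y t hY, det_transpose]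
  exact Ring.inverse_mul_cancel _ hM

lemma cont_Mf : Continuous (Mf Y) :=
  continuous_const.sub ((Complex.continuous_ofReal).smul continuous_const)
lemma cont_Pf : Continuous (Pf Y) :=
  continuous_const.add ((Complex.continuous_ofReal).smul continuous_const)

lemma evU : ∀ᶠ t : ℝ in 𝓝 0, IsUnit (Mf Y t).det ∧ IsUnit (Pf Y t).det := by
  have hMc : Continuous fun t : ℝ => (Mf Y t).det := (cont_Mf Y).matrix_det
  have hPc : Continuous fun t : ℝ => (Pf Y t).det := (cont_Pf Y).matrix_det
  have h1 : ∀ᶠ t in 𝓝 (0:ℝ), (Mf Y t).det ≠ 0 := by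
    apply (hMc.continuousAt).eventually_ne
    rw [Mf_zero, det_one]; exact one_ne_zero
  have h2 : ∀ᶠ t in 𝓝 (0:ℝ), (Pf Y t).det ≠ 0 := by
    apply (hPc.continuousAt).eventually_ne
    rw [Pf_zero, det_one]; exact one_ne_zero
  filter_upwards [h1, h2] with t h1 h2
  exact ⟨isUnit_iff_ne_zero.2 h1, isUnit_iff_ne_zero.2 h2⟩

def gf (t : ℝ) : ℂ := psi T (omf Y V t) (cj (omf Y V t))

def DD (t : ℝ) : ℂ :=
  psi T (rM Y V t) (cj (omf Y V t)) + psi T (uM Y V (t:ℂ)) (cj (rM Y V t))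

def q0 : ℂ := psi T (cM Y V) (cj V) + psi T V (cj (cM Y V))
  + 2 * psi T (bM Y V) (cj (bM Y V))

lemma cj_uM (t : ℝ) : cj (uM Y V (t:ℂ)) = ucM Y V (t:ℂ) := by
  simp [uM, ucM, cj_add, cj_smul, _root_.map_mul, map_pow, map_ofNat, Complex.conj_ofReal]

lemma gf_expand (t : ℝ) (hM : IsUnit (Mf Y t).det) (hP : IsUnit (Pf Y t).det) :
    gf T Y V t = psi T (uM Y V (t:ℂ)) (ucM Y V (t:ℂ)) + (t:ℂ)^3 * DD T Y V t := by
  have hom := omf_eq Y V t hM hP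
  have hcj : cj (omf Y V t) = ucM Y V (t:ℂ) + ((t:ℂ)^3) • cj (rM Y V t) := by
    rw [hom, cj_add, cj_smul, cj_uM]
    simp [map_pow, Complex.conj_ofReal]
  rw [gf]
  conv_lhs => rw [hcj, hom]
  simp only [psi_add_left, psi_add_right, psi_smul_left, psi_smul_right, DD, hcj]
  ring

lemma psi_uu (s : ℂ) : psi T (uM Y V s) (ucM Y V s) = psi T V (cj V)
    + s * (2 * psi T (bM Y V) (cj V) + 2 * psi T V (cj (bM Y V)))
    + s^2 * (2 * psi T (cM Y V) (cj V) + 2 * psi T V (cj (cM Y V))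
        + 4 * psi T (bM Y V) (cj (bM Y V)))
    + s^3 * (4 * psi T (cM Y V) (cj (bM Y V)) + 4 * psi T (bM Y V) (cj (cM Y V)))
    + s^4 * (4 * psi T (cM Y V) (cj (cM Y V))) := by
  simp only [uM, ucM, psi_add_left, psi_add_right, psi_smul_left, psi_smul_right]
  ring

lemma quot_eq (t : ℝ) (ht : t ≠ 0) (hM : IsUnit (Mf Y t).det) (hP : IsUnit (Pf Y t).det)
    (hRv0 : psi T V (cj V) = 0) :
    (gf T Y V t + gf T Y V (-t)) / (t:ℂ)^2
      = 4 * q0 T Y V + (t:ℂ)^2 * (8 * psi T (cM Y V) (cj (cM Y V)))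
        + (t:ℂ) * (DD T Y V t - DD T Y V (-t)) := by
  have hM' : IsUnit (Mf Y (-t)).det := by rw [Mf_neg]; exact hP
  have hP' : IsUnit (Pf Y (-t)).det := by rw [Pf_neg]; exact hM
  rw [gf_expand T Y V t hM hP, gf_expand T Y V (-t) hM' hP', psi_uu, psi_uu, hRv0, q0]
  have ht' : (t:ℂ) ≠ 0 := Complex.ofReal_ne_zero.2 ht
  push_cast
  field_simp
  ring

end Curve2

section Curve3

variable (T : soC m →ₗ[ℂ] soC m) (Y V : Mat m)

lemma contAt_Minv : ContinuousAt (fun t => (Mf Y t)⁻¹) 0 := by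
  have h : ContinuousAt Ring.inverse ((Mf Y 0).det) := by
    rw [Mf_zero, det_one, Ring.inverse_eq_inv']
    exact continuousAt_inv₀ one_ne_zero
  exact (continuousAt_matrix_inv _ h).comp (cont_Mf Y).continuousAt

lemma contAt_Pinv : ContinuousAt (fun t => (Pf Y t)⁻¹) 0 := by
  have h : ContinuousAt Ring.inverse ((Pf Y 0).det) := by
    rw [Pf_zero, det_one, Ring.inverse_eq_inv']
    exact continuousAt_inv₀ one_ne_zero
  exact (continuousAt_matrix_inv _ h).comp (cont_Pf Y).continuousAt

lemma contAt_Af : ContinuousAt (Af Y) 0 :=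
  (contAt_Minv Y).mul (cont_Pf Y).continuousAt

lemma contAt_Bf : ContinuousAt (Bf Y) 0 :=
  (contAt_Pinv Y).mul (cont_Mf Y).continuousAt

lemma contAt_Afinv : ContinuousAt (fun t => (Af Y t)⁻¹) 0 := by
  have h : ContinuousAt Ring.inverse ((Af Y 0).det) := by
    rw [Af_zero, det_one, Ring.inverse_eq_inv']
    exact continuousAt_inv₀ one_ne_zero
  exact (continuousAt_matrix_inv _ h).comp (contAt_Af Y)

lemma contAt_omf : ContinuousAt (omf Y V) 0 :=
  ((contAt_Af Y).mul continuousAt_const).mul (contAt_Afinv Y)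

lemma cont_SL : Continuous (SL Y) := by
  apply Continuous.add
  apply Continuous.add continuous_const
  · exact ((continuous_const.mul Complex.continuous_ofReal).smul continuous_const)
  · exact ((continuous_const.mul (Complex.continuous_ofReal.pow 2)).smul continuous_const)

lemma contAt_rM : ContinuousAt (rM Y V) 0 := by
  have hpP : Continuous (pP Y V) := by
    apply Continuous.add
    · exact continuous_const
    · exact ((continuous_const.mul Complex.continuous_ofReal).smul continuous_const)
  have hEE : ContinuousAt (EE Y) 0 :=
    continuousAt_const.mul (continuousAt_const.add (contAt_Af Y))
  have hFF : ContinuousAt (FF Y) 0 :=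
    continuousAt_const.mul (continuousAt_const.add (contAt_Bf Y))
  exact ((hpP.continuousAt.add ((hEE.mul continuousAt_const).mul (contAt_Bf Y))).sub
    (((cont_SL Y).continuousAt.mul continuousAt_const).mul hFF))

lemma contAt_uM : ContinuousAt (fun t : ℝ => uM Y V (t:ℂ)) 0 := by
  apply ContinuousAt.add
  apply ContinuousAt.add continuousAt_const
  · exact ((continuousAt_const.mul Complex.continuous_ofReal.continuousAt).smul
      continuousAt_const)
  · exact ((continuousAt_const.mul ((Complex.continuous_ofReal.pow 2).continuousAt)).smul
      continuousAt_const)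

lemma contAt_DD : ContinuousAt (DD T Y V) 0 :=
  (contAt_psi T (contAt_rM Y V) (cj_cont.continuousAt.comp (contAt_omf Y V))).add
    (contAt_psi T (contAt_uM Y V) (cj_cont.continuousAt.comp (contAt_rM Y V)))

lemma tends (hRv0 : psi T V (cj V) = 0) :
    Filter.Tendsto (fun t : ℝ => (gf T Y V t + gf T Y V (-t)) / (t:ℂ)^2)
      (𝓝[≠] (0:ℝ)) (𝓝 (4 * q0 T Y V)) := by
  have hDD := contAt_DD T Y V
  have hDDn : ContinuousAt (fun t : ℝ => DD T Y V (-t)) 0 := by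
    have hneg : ContinuousAt (fun t : ℝ => -t) (0:ℝ) := continuous_neg.continuousAt
    have h : ContinuousAt (DD T Y V ∘ fun t : ℝ => -t) 0 :=
      ContinuousAt.comp (by rw [neg_zero]; exact hDD) hneg
    exact h
  have hc : ContinuousAt (fun t : ℝ => 4 * q0 T Y V
      + (t:ℂ)^2 * (8 * psi T (cM Y V) (cj (cM Y V)))
      + (t:ℂ) * (DD T Y V t - DD T Y V (-t))) 0 := by
    apply ContinuousAt.add
    apply ContinuousAt.add continuousAt_const
    · exact ((Complex.continuous_ofReal.pow 2).continuousAt).mul continuousAt_const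
    · exact (Complex.continuous_ofReal.continuousAt).mul (hDD.sub hDDn)
  have hphi : Filter.Tendsto (fun t : ℝ => 4 * q0 T Y V
      + (t:ℂ)^2 * (8 * psi T (cM Y V) (cj (cM Y V)))
      + (t:ℂ) * (DD T Y V t - DD T Y V (-t))) (𝓝 0) (𝓝 (4 * q0 T Y V)) := by
    have h := hc
    unfold ContinuousAt at h
    simpa using h
  refine Filter.Tendsto.congr' ?_ (hphi.mono_left nhdsWithin_le_nhds)
  have hunits : ∀ᶠ t : ℝ in 𝓝[≠] 0, IsUnit (Mf Y t).det ∧ IsUnit (Pf Y t).det :=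
    (evU Y).filter_mono nhdsWithin_le_nhds
  have hne : ∀ᶠ t : ℝ in 𝓝[≠] (0:ℝ), t ≠ 0 := self_mem_nhdsWithin
  filter_upwards [hunits, hne] with t ht htne
  exact (quot_eq T Y V t htne ht.1 ht.2 hRv0).symm

lemma cplx_add_nonneg {a b : ℂ} (ha : 0 ≤ a) (hb : 0 ≤ b) : 0 ≤ a + b := by
  rw [Complex.nonneg_iff] at *
  exact ⟨add_nonneg ha.1 hb.1, by simp [← ha.2, ← hb.2]⟩

lemma cplx_real_mul_nonneg {r : ℝ} (hr : 0 ≤ r) {z : ℂ} (hz : 0 ≤ z) : 0 ≤ (r:ℂ) * z := by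
  rw [Complex.nonneg_iff] at *
  constructor
  · simp only [Complex.mul_re, Complex.ofReal_re, Complex.ofReal_im, zero_mul, sub_zero]
    exact mul_nonneg hr hz.1
  · simp [Complex.mul_im, ← hz.2]

end Curve3

section Key

variable (T : soC m →ₗ[ℂ] soC m)

lemma psi_neg_left (a b : Mat m) : psi T (-a) b = -psi T a b := by
  rw [← neg_one_smul ℂ a, psi_smul_left]; ring

lemma psi_neg_right (a b : Mat m) : psi T a (-b) = -psi T a b := by
  rw [← neg_one_smul ℂ b, psi_smul_right]; ring

lemma key_q0_nonneg (S : Set (soC m))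
    (hS : ∀ v ∈ S, ∀ (A : Mat m) (hA : Aᵀ * A = 1), A.det = 1 → soC.soAct A hA v ∈ S)
    (hRpos : ∀ ω ∈ S, 0 ≤ soC.ip (T ω) (soC.conj ω))
    (v : soC m) (hv : v ∈ S) (hRv : soC.ip (T v) (soC.conj v) = 0)
    (Y : Mat m) (hY : Yᵀ = -Y) : 0 ≤ q0 T Y (v : Mat m) := by
  have hRv0 : psi T (v : Mat m) (cj (v : Mat m)) = 0 := by
    rw [cj_val, psi_eq_ip]; exact hRv
  have hg : ∀ᶠ t : ℝ in 𝓝 0, 0 ≤ gf T Y (v : Mat m) t := by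
    filter_upwards [evU Y] with t ht
    obtain ⟨hM, hP⟩ := ht
    have hA := Af_orth Y t hY hM hP
    have hd := Af_det Y t hY hM
    have hmem := hS v hv (Af Y t) hA hd
    have hnn := hRpos _ hmem
    have hval : soC.ip (T (soC.soAct (Af Y t) hA v)) (soC.conj (soC.soAct (Af Y t) hA v))
        = gf T Y (v : Mat m) t := by
      rw [← psi_eq_ip]; rfl
    rwa [hval] at hnn
  have hgneg : ∀ᶠ t : ℝ in 𝓝 0, 0 ≤ gf T Y (v : Mat m) (-t) := by
    have hneg : Filter.Tendsto (fun t : ℝ => -t) (𝓝 (0:ℝ)) (𝓝 (0:ℝ)) := by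
      simpa using (continuous_neg.tendsto (0:ℝ))
    exact hneg.eventually hg
  have hq : ∀ᶠ t : ℝ in 𝓝[≠] (0:ℝ),
      0 ≤ (gf T Y (v : Mat m) t + gf T Y (v : Mat m) (-t)) / (t:ℂ)^2 := by
    filter_upwards [hg.filter_mono nhdsWithin_le_nhds, hgneg.filter_mono nhdsWithin_le_nhds]
      with t h1 h2
    have hsum := cplx_add_nonneg h1 h2
    have hrw : (gf T Y (v : Mat m) t + gf T Y (v : Mat m) (-t)) / (t:ℂ)^2
        = (((t^2)⁻¹ : ℝ) : ℂ) * (gf T Y (v : Mat m) t + gf T Y (v : Mat m) (-t)) := by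
      push_cast
      ring
    rw [hrw]
    exact cplx_real_mul_nonneg (by positivity) hsum
  have hlim := ge_of_tendsto (tends T Y (v : Mat m) hRv0) hq
  have h4 : q0 T Y (v : Mat m) = ((4⁻¹:ℝ):ℂ) * (4 * q0 T Y (v : Mat m)) := by
    push_cast; ring
  rw [h4]
  exact cplx_real_mul_nonneg (by norm_num) hlim

lemma ad_psi_nonneg (S : Set (soC m))
    (hS : ∀ v ∈ S, ∀ (A : Mat m) (hA : Aᵀ * A = 1), A.det = 1 → soC.soAct A hA v ∈ S)
    (hRpos : ∀ ω ∈ S, 0 ≤ soC.ip (T ω) (soC.conj ω))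
    (v : soC m) (hv : v ∈ S) (hRv : soC.ip (T v) (soC.conj v) = 0)
    (y : soC m) :
    0 ≤ soC.ip (T (soC.ad y v)) (soC.conj (soC.ad y v)) := by
  have hY : (y : Mat m)ᵀ = -(y : Mat m) := y.2
  have hYI : (Complex.I • (y : Mat m))ᵀ = -(Complex.I • (y : Mat m)) := by
    rw [transpose_smul, hY, smul_neg]
  have h1 := key_q0_nonneg T S hS hRpos v hv hRv (y : Mat m) hY
  have h2 := key_q0_nonneg T S hS hRpos v hv hRv (Complex.I • (y : Mat m)) hYI
  have hbI : bM (Complex.I • (y : Mat m)) (v : Mat m)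
      = Complex.I • bM (y : Mat m) (v : Mat m) := by
    simp [bM, smul_mul_assoc, mul_smul_comm, smul_sub]
  have hcI : cM (Complex.I • (y : Mat m)) (v : Mat m) = -cM (y : Mat m) (v : Mat m) := by
    simp only [cM, smul_mul_assoc, mul_smul_comm, smul_sub, sub_mul, mul_sub, smul_smul,
      Complex.I_mul_I, neg_smul, one_smul]
    module
  have hsum : q0 T (y : Mat m) (v : Mat m) + q0 T (Complex.I • (y : Mat m)) (v : Mat m)
      = 4 * psi T (bM (y : Mat m) (v : Mat m)) (cj (bM (y : Mat m) (v : Mat m))) := by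
    rw [q0, q0, hbI, hcI, cj_smul, cj_neg, Complex.conj_I]
    simp only [psi_neg_left, psi_neg_right, psi_smul_left, psi_smul_right, neg_smul]
    ring_nf
    simp only [Complex.I_sq]
    ring
  have hnn := cplx_add_nonneg h1 h2
  rw [hsum] at hnn
  have hip : soC.ip (T (soC.ad y v)) (soC.conj (soC.ad y v))
      = psi T (bM (y : Mat m) (v : Mat m)) (cj (bM (y : Mat m) (v : Mat m))) := by
    rw [← psi_eq_ip]; rfl
  have h4 : psi T (bM (y : Mat m) (v : Mat m)) (cj (bM (y : Mat m) (v : Mat m)))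
      = ((4⁻¹:ℝ):ℂ) * (4 * psi T (bM (y : Mat m) (v : Mat m)) (cj (bM (y : Mat m) (v : Mat m)))) := by
    push_cast; ring
  rw [hip, h4]
  exact cplx_real_mul_nonneg (by norm_num) hnn

end Key

lemma ip_symm (a b : soC m) : soC.ip a b = soC.ip b a := by
  unfold soC.ip
  rw [Matrix.trace_mul_comm]

lemma ip_neg_left (a b : soC m) : soC.ip (-a) b = -soC.ip a b := by
  simp [soC.ip]

lemma ip_neg_right (a b : soC m) : soC.ip a (-b) = -soC.ip a b := by
  simp [soC.ip]

lemma ip_ad (v z w : soC m) : soC.ip (soC.ad v z) w = -soC.ip z (soC.ad v w) := by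
  show -Matrix.trace (((v : Mat m) * (z : Mat m) - (z : Mat m) * (v : Mat m)) * (w : Mat m))
      = -(-Matrix.trace ((z : Mat m) * ((v : Mat m) * (w : Mat m) - (w : Mat m) * (v : Mat m))))
  have h : Matrix.trace ((v : Mat m) * ((z : Mat m) * (w : Mat m)))
      = Matrix.trace ((z : Mat m) * ((w : Mat m) * (v : Mat m))) := by
    rw [trace_mul_comm, mul_assoc]
  simp only [sub_mul, mul_sub, trace_sub, neg_sub, neg_neg, mul_assoc, h]

lemma cplx_neg_nonpos {z : ℂ} (h : 0 ≤ z) : -z ≤ 0 := by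
  rw [Complex.nonneg_iff] at h
  rw [Complex.nonpos_iff]
  exact ⟨by simpa using h.1, by simp [← h.2]⟩

end WKaux

/-- **Intermediate step in Wilking's theorem**: if the symmetric bilinear form
`R X Y := ⟨T X, Y⟩` (complex-bilinear extension of a form on `so(m,ℝ)` with associated
self-adjoint operator `T` w.r.t. `⟨X,Y⟩ = -tr(XY)`) satisfies `R(ω,ω̄) ≥ 0` on an
`SO(m,ℂ)`-Ad-invariant subset `S ⊆ so(m,ℂ)`, and `v ∈ S` satisfies `R(v,v̄) = 0`, then the
operator `-ad_v ∘ T ∘ ad_{v̄}` is positive semidefinite Hermitian: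
`⟨(ad_v ∘ T ∘ ad_{v̄})(x), x̄⟩ ≤ 0` for all `x ∈ so(m,ℂ)`. -/
theorem wilking_psd_operator
    (m : ℕ) (hm : 2 ≤ m) (S : Set (soC m))
    (hS : ∀ v ∈ S, ∀ (A : Matrix (Fin m) (Fin m) ℂ) (hA : Aᵀ * A = 1), A.det = 1 →
      soC.soAct A hA v ∈ S)
    (T : soC m →ₗ[ℂ] soC m)
    (hTreal : ∀ X, T (soC.conj X) = soC.conj (T X))
    (hTsa : ∀ X Y, soC.ip (T X) Y = soC.ip X (T Y))
    (hRpos : ∀ ω ∈ S, 0 ≤ soC.ip (T ω) (soC.conj ω))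
    (v : soC m) (hv : v ∈ S)
    (hRv : soC.ip (T v) (soC.conj v) = 0) :
    ∀ x : soC m, soC.ip (soC.ad v (T (soC.ad (soC.conj v) x))) (soC.conj x) ≤ 0 := by
  intro x
  set w : soC m := soC.ad (soC.conj x) v with hw
  have h1 : soC.ad (soC.conj v) x = -(soC.conj w) := by
    apply Subtype.ext
    show (soC.conj v : Matrix (Fin m) (Fin m) ℂ) * (x : Matrix (Fin m) (Fin m) ℂ)
        - (x : Matrix (Fin m) (Fin m) ℂ) * (soC.conj v : Matrix (Fin m) (Fin m) ℂ)
      = -(WKaux.cj ((soC.conj x : Matrix (Fin m) (Fin m) ℂ) * (v : Matrix (Fin m) (Fin m) ℂ)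
          - (v : Matrix (Fin m) (Fin m) ℂ) * (soC.conj x : Matrix (Fin m) (Fin m) ℂ)))
    rw [← WKaux.cj_val, ← WKaux.cj_val, WKaux.cj_sub, WKaux.cj_mul, WKaux.cj_mul,
      WKaux.cj_cj, neg_sub]
  have h2 : soC.ad v (soC.conj x) = -w := by
    apply Subtype.ext
    show (v : Matrix (Fin m) (Fin m) ℂ) * (soC.conj x : Matrix (Fin m) (Fin m) ℂ)
        - (soC.conj x : Matrix (Fin m) (Fin m) ℂ) * (v : Matrix (Fin m) (Fin m) ℂ)
      = -((soC.conj x : Matrix (Fin m) (Fin m) ℂ) * (v : Matrix (Fin m) (Fin m) ℂ)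
          - (v : Matrix (Fin m) (Fin m) ℂ) * (soC.conj x : Matrix (Fin m) (Fin m) ℂ))
    rw [neg_sub]
  have hQ := WKaux.ad_psi_nonneg T S hS hRpos v hv hRv (soC.conj x)
  calc soC.ip (soC.ad v (T (soC.ad (soC.conj v) x))) (soC.conj x)
      = -soC.ip (T (soC.ad (soC.conj v) x)) (soC.ad v (soC.conj x)) :=
        WKaux.ip_ad v _ _
    _ = -soC.ip (T (-(soC.conj w))) (-w) := by rw [h1, h2]
    _ = -soC.ip (T (soC.conj w)) w := by
        rw [map_neg, WKaux.ip_neg_left, WKaux.ip_neg_right]; ring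
    _ = -soC.ip (T w) (soC.conj w) := by rw [hTsa, WKaux.ip_symm]
    _ ≤ 0 := WKaux.cplx_neg_nonpos hQ


end
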